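/- arXiv:1706.06944 — 7 statements merged into one kernel-verified Lean document; each statement's English description precedes it below -/
import Mathlib

section
/- Let F₁ ⊆ G₁ and F₂ ⊆ G₂ be filters of a finite lattice L. Then the dominance relation mvt(F₁,G₁) ≼ mvt(F₂,G₂) holds (i.e. w(F₁)/w(G₁) ≤ w(F₂)/w(G₂) for every strictly positive w : L → ℝ) if and only if either F₂ = G₂, or both F₁ ⊆ F₂ and G₂∖F₂ ⊆ G₁. (This is the explicit form of the statement that the partial order on matching value terms is the reflexive–transitive closure of the three elementary operations: adding an element of G∖F to the numerator set F, removing an element not in F from the denominator set G, and adding a new element to both F and G.) -/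
/-!
For sufficiency, with `a = w F₁ ≤ b = w F₂ ≤ B = w G₂` the hypotheses give
`a + (B - b) ≤ w G₁`, and `a / (a + B - b) ≤ b / B` is `0 ≤ (b - a) (B - b)`. For necessity, test
the dominance on the weight `1` plus a large mass `M = #F₂ * #G₁` at a
single point: a point of `F₁ \ F₂` drives the left ratio towards `1` while the right one stays
below `1`, and a point of `G₂ \ F₂` outside `G₁` drives the right ratio towards `0` while the left
one stays fixed and positive.
-/

open Finset

/-- A filter of a lattice: a nonempty, upward-closed subset. -/
def IsFilter {L : Type*} [Lattice L] (F : Finset L) : Prop :=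
  F.Nonempty ∧ ∀ c ∈ F, ∀ c', c ≤ c' → c' ∈ F

/-- The dominance order on matching value terms: mvt(F₁,G₁) ≼ mvt(F₂,G₂) iff
w(F₁)/w(G₁) ≤ w(F₂)/w(G₂) for every strictly positive weight function w. -/
def MvtLe {L : Type*} (F₁ G₁ F₂ G₂ : Finset L) : Prop :=
  ∀ w : L → ℝ, (∀ c : L, 0 < w c) →
    (∑ c ∈ F₁, w c) / (∑ c ∈ G₁, w c) ≤ (∑ c ∈ F₂, w c) / (∑ c ∈ G₂, w c)

theorem div_le_div_of_add_sub_le {a b A B : ℝ} (ha : 0 ≤ a) (hab : a ≤ b) (hbB : b ≤ B)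
    (hA : a + (B - b) ≤ A) : a / A ≤ b / B := by
  rcases ha.eq_or_lt with rfl | ha
  · rw [zero_div]
    exact div_nonneg hab (hab.trans hbB)
  rw [div_le_div_iff₀ (by linarith) (by linarith)]
  nlinarith [mul_nonneg (sub_nonneg.2 hab) (sub_nonneg.2 hbB)]

section Dominance

variable {α : Type*} {F₁ G₁ F₂ G₂ : Finset α}

theorem mvtLe_of_eq_right (hF₂ : F₂.Nonempty) (h₁ : F₁ ⊆ G₁) : MvtLe F₁ G₁ F₂ F₂ := by
  intro w hw
  rw [div_self (sum_pos (fun c _ => hw c) hF₂).ne']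
  exact div_le_one_of_le₀ (sum_le_sum_of_subset_of_nonneg h₁ fun c _ _ => (hw c).le)
    (sum_nonneg fun c _ => (hw c).le)

theorem mvtLe_of_subset_of_sdiff_subset [DecidableEq α] (h₁ : F₁ ⊆ G₁) (h₂ : F₂ ⊆ G₂)
    (hF : F₁ ⊆ F₂) (hG : G₂ \ F₂ ⊆ G₁) : MvtLe F₁ G₁ F₂ G₂ := by
  intro w hw
  have hw₀ : ∀ c, 0 ≤ w c := fun c => (hw c).le
  have hdisj : Disjoint F₁ (G₂ \ F₂) :=
    disjoint_left.2 fun c hc hsd => (mem_sdiff.1 hsd).2 (hF hc)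
  refine div_le_div_of_add_sub_le (sum_nonneg fun c _ => hw₀ c)
    (sum_le_sum_of_subset_of_nonneg hF fun c _ _ => hw₀ c)
    (sum_le_sum_of_subset_of_nonneg h₂ fun c _ _ => hw₀ c) ?_
  rw [← sum_sdiff_eq_sub h₂, ← sum_union hdisj]
  exact sum_le_sum_of_subset_of_nonneg (union_subset h₁ hG) fun c _ _ => hw₀ c

variable [DecidableEq α]

theorem sum_one_add_single (s : Finset α) (x : α) (M : ℝ) :
    ∑ c ∈ s, (1 + (Pi.single x M : α → ℝ) c) = #s + if x ∈ s then M else 0 := by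
  rw [sum_add_distrib, sum_pi_single', sum_const, nsmul_one]

theorem MvtLe.card_div_card_le_of_single (h : MvtLe F₁ G₁ F₂ G₂) (x : α) {M : ℝ} (hM : 0 ≤ M) :
    (#F₁ + if x ∈ F₁ then M else 0) / (#G₁ + if x ∈ G₁ then M else 0) ≤
      (#F₂ + if x ∈ F₂ then M else 0) / (#G₂ + if x ∈ G₂ then M else 0) := by
  have hpos : ∀ c, 0 < 1 + (Pi.single x M : α → ℝ) c := fun c => by
    rcases eq_or_ne c x with rfl | hc
    · rw [Pi.single_eq_same]; linarith
    · rw [Pi.single_eq_of_ne hc]; norm_num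
  simpa only [sum_one_add_single] using h _ hpos

theorem MvtLe.subset_of_ssubset (h : MvtLe F₁ G₁ F₂ G₂) (h₁ : F₁ ⊆ G₁) (hlt : F₂ ⊂ G₂) :
    F₁ ⊆ F₂ := by
  intro x hx
  by_contra hx₂
  have hf₁ : (1 : ℝ) ≤ #F₁ := by exact_mod_cast card_pos.2 ⟨x, hx⟩
  have hg₁ : (1 : ℝ) ≤ #G₁ := by exact_mod_cast card_pos.2 ⟨x, h₁ hx⟩
  have hcard : (#F₂ : ℝ) + 1 ≤ #G₂ := by exact_mod_cast card_lt_card hlt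
  have hM : (0 : ℝ) ≤ #F₂ * #G₁ := by positivity
  have hw := h.card_div_card_le_of_single x hM
  rw [if_pos hx, if_pos (h₁ hx), if_neg hx₂, add_zero] at hw
  by_cases hxG₂ : x ∈ G₂
  · rw [if_pos hxG₂, div_le_div_iff₀ (by linarith) (by linarith)] at hw
    nlinarith [mul_le_mul_of_nonneg_left hg₁ (Nat.cast_nonneg (α := ℝ) #F₂)]
  · rw [if_neg hxG₂, add_zero, div_le_div_iff₀ (by linarith) (by linarith)] at hw
    nlinarith

theorem MvtLe.sdiff_subset (h : MvtLe F₁ G₁ F₂ G₂) (hF₁ : F₁.Nonempty) (h₁ : F₁ ⊆ G₁) :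
    G₂ \ F₂ ⊆ G₁ := by
  intro x hx
  rw [mem_sdiff] at hx
  by_contra hxG₁
  have hf₁ : (1 : ℝ) ≤ #F₁ := by exact_mod_cast card_pos.2 hF₁
  have hg₁ : (1 : ℝ) ≤ #G₁ := by exact_mod_cast card_pos.2 (hF₁.mono h₁)
  have hg₂ : (1 : ℝ) ≤ #G₂ := by exact_mod_cast card_pos.2 ⟨x, hx.1⟩
  have hM : (0 : ℝ) ≤ #F₂ * #G₁ := by positivity
  have hw := h.card_div_card_le_of_single x hM
  rw [if_neg fun hxF₁ => hxG₁ (h₁ hxF₁), if_neg hxG₁, if_neg hx.2, if_pos hx.1, add_zero,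
    add_zero, add_zero, div_le_div_iff₀ (by linarith) (by linarith)] at hw
  nlinarith [mul_le_mul_of_nonneg_right hf₁ (by linarith : (0 : ℝ) ≤ #G₂ + #F₂ * #G₁)]

end Dominance

theorem stmt7_general {L : Type*} [Lattice L] [DecidableEq L]
    (F₁ G₁ F₂ G₂ : Finset L)
    (hF₁ : IsFilter F₁) (hF₂ : IsFilter F₂)
    (h₁ : F₁ ⊆ G₁) (h₂ : F₂ ⊆ G₂) :
    MvtLe F₁ G₁ F₂ G₂ ↔ (F₂ = G₂ ∨ (F₁ ⊆ F₂ ∧ G₂ \ F₂ ⊆ G₁)) := by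
  refine ⟨fun h => ?_, ?_⟩
  · rcases h₂.eq_or_ssubset with heq | hlt
    · exact Or.inl heq
    · exact Or.inr ⟨h.subset_of_ssubset h₁ hlt, h.sdiff_subset hF₁.1 h₁⟩
  · rintro (rfl | ⟨hF, hG⟩)
    · exact mvtLe_of_eq_right hF₂.1 h₁
    · exact mvtLe_of_subset_of_sdiff_subset h₁ h₂ hF hG

/-- for filters F₁ ⊆ G₁ and F₂ ⊆ G₂, dominance mvt(F₁,G₁) ≼ mvt(F₂,G₂)
holds iff either F₂ = G₂, or both F₁ ⊆ F₂ and G₂∖F₂ ⊆ G₁. -/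
theorem stmt7 {L : Type*} [Lattice L] [Fintype L] [DecidableEq L]
    (F₁ G₁ F₂ G₂ : Finset L)
    (hF₁ : IsFilter F₁) (hG₁ : IsFilter G₁) (hF₂ : IsFilter F₂) (hG₂ : IsFilter G₂)
    (h₁ : F₁ ⊆ G₁) (h₂ : F₂ ⊆ G₂) :
    MvtLe F₁ G₁ F₂ G₂ ↔ (F₂ = G₂ ∨ (F₁ ⊆ F₂ ∧ G₂ \ F₂ ⊆ G₁)) :=
  stmt7_general F₁ G₁ F₂ G₂ hF₁ hF₂ h₁ h₂
end

section
/- Let F₁ ⊆ G₁ and F₂ ⊆ G₂ be filters of a finite lattice L, and set F_j = F₁∪F₂ and G_j = (G₁∪F₂)∩(F₁∪G₂). Then F_j and G_j are filters with F_j ⊆ G_j, the pair (F_j,G_j) is an upper bound of (F₁,G₁) and (F₂,G₂) in the dominance order (mvt(Fᵢ,Gᵢ) ≼ mvt(F_j,G_j) for i = 1,2), and it is a least upper bound: for all filters F′ ⊆ G′ with mvt(Fᵢ,Gᵢ) ≼ mvt(F′,G′) for i = 1,2, also mvt(F_j,G_j) ≼ mvt(F′,G′). In other words, mvt(F_j,G_j)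 is the join of mvt(F₁,G₁) and mvt(F₂,G₂) in the lattice of matching value terms. -/
open Finset

section StmtEightHelpers
set_option linter.unusedSectionVars false

variable {L : Type*} [Fintype L] [DecidableEq L]

private lemma stmt8_sumpos {S : Finset L} {w : L → ℝ} (hS : S.Nonempty)
    (hw : ∀ c, 0 < w c) : 0 < ∑ c ∈ S, w c := Finset.sum_pos (fun i _ => hw i) hS

private lemma stmt8_summono {S T : Finset L} {w : L → ℝ} (h : S ⊆ T)
    (hw : ∀ c, 0 < w c) : ∑ c ∈ S, w c ≤ ∑ c ∈ T, w c :=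
  Finset.sum_le_sum_of_subset_of_nonneg h (fun i _ _ => (hw i).le)

private lemma stmt8_sum_le_cardN {S : Finset L} {w : L → ℝ} {N : ℝ} (hN : 0 ≤ N)
    (h : ∀ x, w x ≤ N) : ∑ c ∈ S, w c ≤ (Fintype.card L : ℝ) * N := by
  calc ∑ c ∈ S, w c ≤ ∑ _c ∈ S, N := Finset.sum_le_sum (fun i _ => h i)
    _ = (S.card : ℝ) * N := by rw [Finset.sum_const, nsmul_eq_mul]
    _ ≤ (Fintype.card L : ℝ) * N := by
        apply mul_le_mul_of_nonneg_right _ hN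
        exact_mod_cast Finset.card_le_univ S

private lemma stmt8_sum_ones_le {S : Finset L} {w : L → ℝ} (h : ∀ x ∈ S, w x = 1) :
    ∑ c ∈ S, w c ≤ (Fintype.card L : ℝ) := by
  calc ∑ c ∈ S, w c = ∑ _c ∈ S, (1:ℝ) := Finset.sum_congr rfl h
    _ = (S.card : ℝ) := by rw [Finset.sum_const, nsmul_eq_mul, mul_one]
    _ ≤ (Fintype.card L : ℝ) := by exact_mod_cast Finset.card_le_univ S

private lemma stmt8_sum_bump_le {S : Finset L} {w : L → ℝ} {N : ℝ} {c : L} (hN : 1 ≤ N)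
    (h : ∀ x ∈ S, x = c ∨ w x = 1) (hc : w c ≤ N) :
    ∑ x ∈ S, w x ≤ N + (Fintype.card L : ℝ) := by
  have step : ∀ x ∈ S, w x ≤ (if x = c then N - 1 else 0) + 1 := by
    intro x hx
    rcases h x hx with h1 | h1
    · subst h1; simp; linarith
    · rw [h1]; split_ifs with h2
      · linarith
      · norm_num
  calc ∑ x ∈ S, w x ≤ ∑ x ∈ S, ((if x = c then N - 1 else 0) + 1) :=
        Finset.sum_le_sum step
    _ = (if c ∈ S then N - 1 else 0) + (S.card : ℝ) := by
        rw [Finset.sum_add_distrib, Finset.sum_ite_eq' S c (fun _ => N - 1),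
          Finset.sum_const, nsmul_eq_mul, mul_one]
    _ ≤ N + (Fintype.card L : ℝ) := by
        have : (S.card : ℝ) ≤ (Fintype.card L : ℝ) := by exact_mod_cast Finset.card_le_univ S
        split_ifs <;> linarith

private lemma stmt8_two_le_sum {S : Finset L} {w : L → ℝ} {c d : L} (hcd : c ≠ d)
    (hc : c ∈ S) (hd : d ∈ S) (hw : ∀ x, 0 < w x) : w c + w d ≤ ∑ x ∈ S, w x := by
  have hsub : ({c, d} : Finset L) ⊆ S := by
    intro x hx; rcases Finset.mem_insert.1 hx with h | h
    · subst h; exact hc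
    · rw [Finset.mem_singleton] at h; subst h; exact hd
  calc w c + w d = ∑ x ∈ ({c, d} : Finset L), w x := (Finset.sum_pair hcd).symm
    _ ≤ ∑ x ∈ S, w x := stmt8_summono hsub hw

/-- Necessity 1: if `MvtLe F G F' G'` then there cannot exist `c ∈ F \ F'` and
`d ∈ G' \ F'`. -/
private lemma stmt8_nec1 {F G F' G' : Finset L} (h : MvtLe F G F' G') (hFG : F ⊆ G)
    {c d : L} (hcF : c ∈ F) (hdG' : d ∈ G') (hcF' : c ∉ F') (hdF' : d ∉ F') : False := by
  set n : ℝ := (Fintype.card L : ℝ) with hn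
  have hn0 : 0 ≤ n := by positivity
  set N : ℝ := n ^ 2 + 1 with hN
  have hN1 : (1:ℝ) ≤ N := by nlinarith
  set w : L → ℝ := fun x => if x = c then N else if x = d then N else 1 with hw
  have hwpos : ∀ x, 0 < w x := by
    intro x; simp only [hw]; split_ifs <;> linarith
  have hwle : ∀ x, w x ≤ N := by
    intro x; simp only [hw]; split_ifs <;> linarith
  have hwc : w c = N := by simp [hw]
  have hwd : w d = N := by simp only [hw]; split_ifs <;> rfl
  have key := h w hwpos
  have hbF : N ≤ ∑ x ∈ F, w x := by
    rw [← hwc]; exact Finset.single_le_sum (fun i _ => (hwpos i).le) hcF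
  have hbG' : N ≤ ∑ x ∈ G', w x := by
    rw [← hwd]; exact Finset.single_le_sum (fun i _ => (hwpos i).le) hdG'
  have hbF' : ∑ x ∈ F', w x ≤ n := by
    apply stmt8_sum_ones_le
    intro x hx
    simp only [hw]
    rw [if_neg, if_neg]
    · rintro rfl; exact hdF' hx
    · rintro rfl; exact hcF' hx
  have hbG : ∑ x ∈ G, w x ≤ n * N := stmt8_sum_le_cardN (by linarith) hwle
  have hGpos : 0 < ∑ x ∈ G, w x := stmt8_sumpos ⟨c, hFG hcF⟩ hwpos
  have hG'pos : 0 < ∑ x ∈ G', w x := stmt8_sumpos ⟨d, hdG'⟩ hwpos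
  rw [div_le_div_iff₀ hGpos hG'pos] at key
  have hF'nn : 0 ≤ ∑ x ∈ F', w x := Finset.sum_nonneg (fun i _ => (hwpos i).le)
  nlinarith [key, hbF, hbG', hbF', hbG, hGpos, hG'pos, hF'nn]

/-- Necessity 2: if `MvtLe F G F' G'` then there cannot exist `c ∈ F ∩ F'` and
`d ∈ (G' \ F') \ G`. -/
private lemma stmt8_nec2 {F G F' G' : Finset L} (h : MvtLe F G F' G') (hFG : F ⊆ G)
    (hF'G' : F' ⊆ G') {c d : L} (hcF : c ∈ F) (hcF' : c ∈ F') (hdG' : d ∈ G')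
    (hdF' : d ∉ F') (hdG : d ∉ G) : False := by
  have hcd : c ≠ d := by rintro rfl; exact hdF' hcF'
  set n : ℝ := (Fintype.card L : ℝ) with hn
  have hn0 : 0 ≤ n := by positivity
  set N : ℝ := 3 * n + 1 with hN
  have hN1 : (1:ℝ) ≤ N := by linarith
  set w : L → ℝ := fun x => if x = c then N else if x = d then N else 1 with hw
  have hwpos : ∀ x, 0 < w x := by
    intro x; simp only [hw]; split_ifs <;> linarith
  have hwc : w c = N := by simp [hw]
  have hwd : w d = N := by simp only [hw]; split_ifs <;> rfl
  have key := h w hwpos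
  have hbF : N ≤ ∑ x ∈ F, w x := by
    rw [← hwc]; exact Finset.single_le_sum (fun i _ => (hwpos i).le) hcF
  have hbG' : 2 * N ≤ ∑ x ∈ G', w x := by
    have := stmt8_two_le_sum hcd (hF'G' hcF') hdG' hwpos
    rw [hwc, hwd] at this; linarith
  have hbF' : ∑ x ∈ F', w x ≤ N + n := by
    apply stmt8_sum_bump_le hN1 _ hwc.le
    intro x hx
    by_cases hxc : x = c
    · exact Or.inl hxc
    · right; simp only [hw]; rw [if_neg hxc, if_neg]
      rintro rfl; exact hdF' hx
  have hbG : ∑ x ∈ G, w x ≤ N + n := by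
    apply stmt8_sum_bump_le hN1 _ hwc.le
    intro x hx
    by_cases hxc : x = c
    · exact Or.inl hxc
    · right; simp only [hw]; rw [if_neg hxc, if_neg]
      rintro rfl; exact hdG hx
  have hGpos : 0 < ∑ x ∈ G, w x := stmt8_sumpos ⟨c, hFG hcF⟩ hwpos
  have hG'pos : 0 < ∑ x ∈ G', w x := stmt8_sumpos ⟨d, hdG'⟩ hwpos
  rw [div_le_div_iff₀ hGpos hG'pos] at key
  nlinarith [key, hbF, hbG', hbF', hbG, hGpos, hG'pos]

private lemma stmt8_split2 {w : L → ℝ} {S A B : Finset L}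
    (h : ∀ x, x ∈ S ↔ x ∈ A ∨ x ∈ B) (hd : ∀ x, x ∈ A → x ∈ B → False) :
    ∑ x ∈ S, w x = ∑ x ∈ A, w x + ∑ x ∈ B, w x := by
  have hS : S = A ∪ B := Finset.ext fun x => by rw [h x, Finset.mem_union]
  rw [hS]
  exact Finset.sum_union (Finset.disjoint_left.2 fun {x} hx hy => (hd x hx hy).elim)

/-- Sufficiency: the combinatorial conditions imply the dominance inequality. -/
private lemma stmt8_suff {F G F' G' : Finset L}
    (hFne : F.Nonempty) (hG'ne : G'.Nonempty) (hFG : F ⊆ G) (hF'G' : F' ⊆ G')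
    (ha : ∀ x, x ∈ F → x ∈ G' → x ∈ F')
    (h20_01 : F \ G' = ∅ ∨ (G' \ F') \ G = ∅)
    (h20_11 : F \ G' = ∅ ∨ (G \ F) ∩ (G' \ F') = ∅)
    (h22_01 : F ∩ F' = ∅ ∨ (G' \ F') \ G = ∅) :
    MvtLe F G F' G' := by
  intro w hw
  have hnn : ∀ S : Finset L, 0 ≤ ∑ x ∈ S, w x :=
    fun S => Finset.sum_nonneg (fun i _ => (hw i).le)
  have eF : ∑ x ∈ F, w x = ∑ x ∈ F \ G', w x + ∑ x ∈ F ∩ F', w x := by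
    apply stmt8_split2
    · intro x
      simp only [Finset.mem_sdiff, Finset.mem_inter]
      constructor
      · intro hx
        by_cases hG' : x ∈ G'
        · exact Or.inr ⟨hx, ha x hx hG'⟩
        · exact Or.inl ⟨hx, hG'⟩
      · rintro (⟨hx, _⟩ | ⟨hx, _⟩) <;> exact hx
    · intro x hx hy
      simp only [Finset.mem_sdiff, Finset.mem_inter] at hx hy
      exact hx.2 (hF'G' hy.2)
  have eG : ∑ x ∈ G, w x = (∑ x ∈ F \ G', w x + ∑ x ∈ F ∩ F', w x) +
      (∑ x ∈ (G \ F) \ G', w x + ∑ x ∈ (G \ F) ∩ (G' \ F'), w x +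
        ∑ x ∈ (G \ F) ∩ F', w x) := by
    rw [← eF]
    have e1 : ∑ x ∈ G, w x = ∑ x ∈ F, w x + ∑ x ∈ G \ F, w x := by
      rw [← Finset.sum_sdiff hFG]; ring
    rw [e1]
    congr 1
    have e2 : ∑ x ∈ G \ F, w x = ∑ x ∈ (G \ F) \ G', w x +
        (∑ x ∈ (G \ F) ∩ (G' \ F'), w x + ∑ x ∈ (G \ F) ∩ F', w x) := by
      rw [stmt8_split2 (A := (G \ F) \ G') (B := ((G \ F) ∩ (G' \ F')) ∪ ((G \ F) ∩ F'))]
      · congr 1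
        apply stmt8_split2
        · intro x; rw [Finset.mem_union]
        · intro x hx hy
          simp only [Finset.mem_sdiff, Finset.mem_inter] at hx hy
          exact hx.2.2 hy.2
      · intro x
        simp only [Finset.mem_union, Finset.mem_sdiff, Finset.mem_inter]
        constructor
        · intro hx
          by_cases hG' : x ∈ G'
          · by_cases hF' : x ∈ F'
            · exact Or.inr (Or.inr ⟨hx, hF'⟩)
            · exact Or.inr (Or.inl ⟨hx, hG', hF'⟩)
          · exact Or.inl ⟨hx, hG'⟩
        · rintro (⟨hx, _⟩ | ⟨hx, _⟩ | ⟨hx, _⟩) <;> exact hx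
      · intro x hx hy
        simp only [Finset.mem_union, Finset.mem_sdiff, Finset.mem_inter] at hx hy
        rcases hy with hy | hy
        · exact hx.2 hy.2.1
        · exact hx.2 (hF'G' hy.2)
    rw [e2]; ring
  have eF' : ∑ x ∈ F', w x = ∑ x ∈ F ∩ F', w x + ∑ x ∈ (G \ F) ∩ F', w x +
      ∑ x ∈ F' \ G, w x := by
    rw [stmt8_split2 (A := F ∩ F') (B := ((G \ F) ∩ F') ∪ (F' \ G))]
    · rw [stmt8_split2 (w := w) (S := ((G \ F) ∩ F') ∪ (F' \ G)) (A := (G \ F) ∩ F')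
        (B := F' \ G)]
      · ring
      · intro x; rw [Finset.mem_union]
      · intro x hx hy
        simp only [Finset.mem_sdiff, Finset.mem_inter] at hx hy
        exact hy.2 hx.1.1
    · intro x
      simp only [Finset.mem_union, Finset.mem_sdiff, Finset.mem_inter]
      constructor
      · intro hx
        by_cases hF : x ∈ F
        · exact Or.inl ⟨hF, hx⟩
        · by_cases hG : x ∈ G
          · exact Or.inr (Or.inl ⟨⟨hG, hF⟩, hx⟩)
          · exact Or.inr (Or.inr ⟨hx, hG⟩)
      · rintro (⟨_, hx⟩ | ⟨_, hx⟩ | ⟨hx, _⟩) <;> exact hx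
    · intro x hx hy
      simp only [Finset.mem_union, Finset.mem_sdiff, Finset.mem_inter] at hx hy
      rcases hy with hy | hy
      · exact hy.1.2 hx.1
      · exact hy.2 (hFG hx.1)
  have eG' : ∑ x ∈ G', w x = (∑ x ∈ F ∩ F', w x + ∑ x ∈ (G \ F) ∩ F', w x +
      ∑ x ∈ F' \ G, w x) + (∑ x ∈ (G \ F) ∩ (G' \ F'), w x +
        ∑ x ∈ (G' \ F') \ G, w x) := by
    rw [← eF']
    have e1 : ∑ x ∈ G', w x = ∑ x ∈ F', w x + ∑ x ∈ G' \ F', w x := by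
      rw [← Finset.sum_sdiff hF'G']; ring
    rw [e1]
    congr 1
    apply stmt8_split2
    · intro x
      simp only [Finset.mem_sdiff, Finset.mem_inter]
      constructor
      · intro hx
        by_cases hG : x ∈ G
        · by_cases hF : x ∈ F
          · exact absurd (ha x hF hx.1) hx.2
          · exact Or.inl ⟨⟨hG, hF⟩, hx⟩
        · exact Or.inr ⟨hx, hG⟩
      · rintro (⟨_, hx⟩ | ⟨hx, _⟩) <;> exact hx
    · intro x hx hy
      simp only [Finset.mem_sdiff, Finset.mem_inter] at hx hy
      exact hy.2 hx.1.1
  have z1 : (∑ x ∈ F \ G', w x) * ∑ x ∈ (G' \ F') \ G, w x = 0 := by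
    rcases h20_01 with h | h
    · rw [h, Finset.sum_empty, zero_mul]
    · rw [h, Finset.sum_empty, mul_zero]
  have z2 : (∑ x ∈ F \ G', w x) * ∑ x ∈ (G \ F) ∩ (G' \ F'), w x = 0 := by
    rcases h20_11 with h | h
    · rw [h, Finset.sum_empty, zero_mul]
    · rw [h, Finset.sum_empty, mul_zero]
  have z3 : (∑ x ∈ F ∩ F', w x) * ∑ x ∈ (G' \ F') \ G, w x = 0 := by
    rcases h22_01 with h | h
    · rw [h, Finset.sum_empty, zero_mul]
    · rw [h, Finset.sum_empty, mul_zero]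
  have hGpos : 0 < ∑ x ∈ G, w x := stmt8_sumpos (hFne.mono hFG) hw
  have hG'pos : 0 < ∑ x ∈ G', w x := stmt8_sumpos hG'ne hw
  rw [div_le_div_iff₀ hGpos hG'pos, eF, eG, eF', eG']
  have n20 := hnn (F \ G'); have n22 := hnn (F ∩ F'); have n10 := hnn ((G \ F) \ G')
  have n11 := hnn ((G \ F) ∩ (G' \ F')); have n12 := hnn ((G \ F) ∩ F')
  have n01 := hnn ((G' \ F') \ G); have n02 := hnn (F' \ G)
  nlinarith [z1, z2, z3, mul_nonneg n02 n10, mul_nonneg n02 n11, mul_nonneg n02 n12,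
    mul_nonneg n10 n12, mul_nonneg n10 n22, mul_nonneg n11 n12,
    mul_nonneg n12 n12, mul_nonneg n12 n22]

end StmtEightHelpers

/-- with F_j = F₁∪F₂ and G_j = (G₁∪F₂)∩(F₁∪G₂), the pair (F_j,G_j)
consists of filters with F_j ⊆ G_j and mvt(F_j,G_j) is the join of mvt(F₁,G₁)
and mvt(F₂,G₂) in the dominance order. -/
theorem stmt8 {L : Type*} [Lattice L] [Fintype L] [DecidableEq L]
    (F₁ G₁ F₂ G₂ : Finset L)
    (hF₁ : IsFilter F₁) (hG₁ : IsFilter G₁) (hF₂ : IsFilter F₂) (hG₂ : IsFilter G₂)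
    (h₁ : F₁ ⊆ G₁) (h₂ : F₂ ⊆ G₂) :
    IsFilter (F₁ ∪ F₂) ∧ IsFilter ((G₁ ∪ F₂) ∩ (F₁ ∪ G₂)) ∧
    F₁ ∪ F₂ ⊆ (G₁ ∪ F₂) ∩ (F₁ ∪ G₂) ∧
    MvtLe F₁ G₁ (F₁ ∪ F₂) ((G₁ ∪ F₂) ∩ (F₁ ∪ G₂)) ∧
    MvtLe F₂ G₂ (F₁ ∪ F₂) ((G₁ ∪ F₂) ∩ (F₁ ∪ G₂)) ∧
    (∀ F' G' : Finset L, IsFilter F' → IsFilter G' → F' ⊆ G' →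
      MvtLe F₁ G₁ F' G' → MvtLe F₂ G₂ F' G' →
      MvtLe (F₁ ∪ F₂) ((G₁ ∪ F₂) ∩ (F₁ ∪ G₂)) F' G') := by
  obtain ⟨c₀, hc₀⟩ := hF₁.1
  -- the top element
  set T : L := Finset.univ.sup' ⟨c₀, Finset.mem_univ c₀⟩ id with hTdef
  have hT : ∀ x : L, x ≤ T := fun x => Finset.le_sup' id (Finset.mem_univ x)
  have memT : ∀ {F : Finset L}, IsFilter F → T ∈ F := by
    intro F hF
    obtain ⟨c, hc⟩ := hF.1
    exact hF.2 c hc T (hT c)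
  -- Part 1: F₁ ∪ F₂ is a filter
  have part1 : IsFilter (F₁ ∪ F₂) := by
    constructor
    · exact ⟨c₀, Finset.mem_union_left _ hc₀⟩
    · intro c hc c' hle
      rcases Finset.mem_union.1 hc with h | h
      · exact Finset.mem_union_left _ (hF₁.2 c h c' hle)
      · exact Finset.mem_union_right _ (hF₂.2 c h c' hle)
  -- Part 3: inclusion
  have part3 : F₁ ∪ F₂ ⊆ (G₁ ∪ F₂) ∩ (F₁ ∪ G₂) := by
    intro x hx
    rw [Finset.mem_inter, Finset.mem_union, Finset.mem_union]
    rcases Finset.mem_union.1 hx with h | h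
    · exact ⟨Or.inl (h₁ h), Or.inl h⟩
    · exact ⟨Or.inr h, Or.inr (h₂ h)⟩
  -- Part 2: the intersection is a filter
  have part2 : IsFilter ((G₁ ∪ F₂) ∩ (F₁ ∪ G₂)) := by
    constructor
    · exact ⟨c₀, part3 (Finset.mem_union_left _ hc₀)⟩
    · intro c hc c' hle
      rw [Finset.mem_inter, Finset.mem_union, Finset.mem_union] at hc ⊢
      obtain ⟨hc1, hc2⟩ := hc
      constructor
      · rcases hc1 with h | h
        · exact Or.inl (hG₁.2 c h c' hle)
        · exact Or.inr (hF₂.2 c h c' hle)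
      · rcases hc2 with h | h
        · exact Or.inl (hF₁.2 c h c' hle)
        · exact Or.inr (hG₂.2 c h c' hle)
  -- the complement of Fⱼ inside Gⱼ is contained in G₁ \ F₁ and G₂ \ F₂
  have hdiff1 : ((G₁ ∪ F₂) ∩ (F₁ ∪ G₂)) \ (F₁ ∪ F₂) ⊆ G₁ \ F₁ := by
    intro x hx
    rw [Finset.mem_sdiff, Finset.mem_inter, Finset.mem_union, Finset.mem_union,
      Finset.mem_union] at hx
    rw [Finset.mem_sdiff]
    obtain ⟨⟨hx1, _⟩, hx3⟩ := hx
    push_neg at hx3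
    rcases hx1 with h | h
    · exact ⟨h, hx3.1⟩
    · exact absurd h hx3.2
  have hdiff2 : ((G₁ ∪ F₂) ∩ (F₁ ∪ G₂)) \ (F₁ ∪ F₂) ⊆ G₂ \ F₂ := by
    intro x hx
    rw [Finset.mem_sdiff, Finset.mem_inter, Finset.mem_union, Finset.mem_union,
      Finset.mem_union] at hx
    rw [Finset.mem_sdiff]
    obtain ⟨⟨_, hx2⟩, hx3⟩ := hx
    push_neg at hx3
    rcases hx2 with h | h
    · exact absurd h hx3.1
    · exact ⟨h, hx3.2⟩
  -- Parts 4 and 5: upper bound property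
  have upper : ∀ (F G : Finset L), IsFilter F → IsFilter G → F ⊆ G → F ⊆ F₁ ∪ F₂ →
      ((G₁ ∪ F₂) ∩ (F₁ ∪ G₂)) \ (F₁ ∪ F₂) ⊆ G \ F →
      MvtLe F G (F₁ ∪ F₂) ((G₁ ∪ F₂) ∩ (F₁ ∪ G₂)) := by
    intro F G hF hG hFG hFj hGd w hw
    have e1 := Finset.sum_sdiff (f := w) hFG
    have e2 := Finset.sum_sdiff (f := w) part3
    have hmono : ∑ x ∈ ((G₁ ∪ F₂) ∩ (F₁ ∪ G₂)) \ (F₁ ∪ F₂), w x ≤ ∑ x ∈ G \ F, w x :=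
      stmt8_summono hGd hw
    have hax : ∑ x ∈ F, w x ≤ ∑ x ∈ F₁ ∪ F₂, w x := stmt8_summono hFj hw
    have hGpos : 0 < ∑ x ∈ G, w x := stmt8_sumpos hG.1 hw
    have hGjpos : 0 < ∑ x ∈ (G₁ ∪ F₂) ∩ (F₁ ∪ G₂), w x := stmt8_sumpos part2.1 hw
    have hFpos : 0 < ∑ x ∈ F, w x := stmt8_sumpos hF.1 hw
    have hq : 0 ≤ ∑ x ∈ ((G₁ ∪ F₂) ∩ (F₁ ∪ G₂)) \ (F₁ ∪ F₂), w x :=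
      Finset.sum_nonneg (fun i _ => (hw i).le)
    rw [div_le_div_iff₀ hGpos hGjpos]
    nlinarith [e1, e2, hmono, hax, hFpos, hq]
  have part4 : MvtLe F₁ G₁ (F₁ ∪ F₂) ((G₁ ∪ F₂) ∩ (F₁ ∪ G₂)) :=
    upper F₁ G₁ hF₁ hG₁ h₁ Finset.subset_union_left hdiff1
  have part5 : MvtLe F₂ G₂ (F₁ ∪ F₂) ((G₁ ∪ F₂) ∩ (F₁ ∪ G₂)) :=
    upper F₂ G₂ hF₂ hG₂ h₂ Finset.subset_union_right hdiff2
  refine ⟨part1, part2, part3, part4, part5, ?_⟩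
  -- Part 6: least upper bound
  intro F' G' hF' hG' hsub' hyp1 hyp2
  apply stmt8_suff part1.1 hG'.1 part3 hsub'
  · -- condition (a)
    intro x hx hxG'
    by_contra hxF'
    rcases Finset.mem_union.1 hx with h | h
    · exact stmt8_nec1 hyp1 h₁ h hxG' hxF' hxF'
    · exact stmt8_nec1 hyp2 h₂ h hxG' hxF' hxF'
  · -- condition t20 * t01 = 0 : show the t01 region is empty
    right
    rw [Finset.eq_empty_iff_forall_notMem]
    intro d hd
    rw [Finset.mem_sdiff, Finset.mem_sdiff, Finset.mem_inter] at hd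
    obtain ⟨⟨hdG', hdF'⟩, hdGj⟩ := hd
    rw [Finset.mem_union, Finset.mem_union] at hdGj
    push_neg at hdGj
    by_cases hdG1 : d ∈ G₁
    · by_cases hdG2 : d ∈ G₂
      · exact (hdGj (Or.inl hdG1)).2 hdG2
      · exact stmt8_nec2 hyp2 h₂ hsub' (memT hF₂) (memT hF') hdG' hdF' hdG2
    · exact stmt8_nec2 hyp1 h₁ hsub' (memT hF₁) (memT hF') hdG' hdF' hdG1
  · -- condition t20 * t11 = 0
    by_cases h20 : (F₁ ∪ F₂) \ G' = ∅
    · exact Or.inl h20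
    · right
      rw [Finset.eq_empty_iff_forall_notMem]
      intro d hd
      rw [Finset.mem_inter, Finset.mem_sdiff, Finset.mem_sdiff] at hd
      obtain ⟨-, hdG', hdF'⟩ := hd
      obtain ⟨c, hc⟩ := Finset.nonempty_iff_ne_empty.2 h20
      rw [Finset.mem_sdiff] at hc
      obtain ⟨hcFj, hcG'⟩ := hc
      have hcF' : c ∉ F' := fun h => hcG' (hsub' h)
      rcases Finset.mem_union.1 hcFj with h | h
      · exact stmt8_nec1 hyp1 h₁ h hdG' hcF' hdF'
      · exact stmt8_nec1 hyp2 h₂ h hdG' hcF' hdF'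
  · -- condition t22 * t01 = 0 : t01 region empty (same as above)
    right
    rw [Finset.eq_empty_iff_forall_notMem]
    intro d hd
    rw [Finset.mem_sdiff, Finset.mem_sdiff, Finset.mem_inter] at hd
    obtain ⟨⟨hdG', hdF'⟩, hdGj⟩ := hd
    rw [Finset.mem_union, Finset.mem_union] at hdGj
    push_neg at hdGj
    by_cases hdG1 : d ∈ G₁
    · by_cases hdG2 : d ∈ G₂
      · exact (hdGj (Or.inl hdG1)).2 hdG2
      · exact stmt8_nec2 hyp2 h₂ hsub' (memT hF₂) (memT hF') hdG' hdF' hdG2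
    · exact stmt8_nec2 hyp1 h₁ hsub' (memT hF₁) (memT hF') hdG' hdF' hdG1
end

section
/- Let F₁ ⊊ G₁ and F₂ ⊊ G₂ be filters of a finite lattice L, and set F_m = F₁∩F₂ and G_m = ⟨(G₁∖F₁) ∪ (G₂∖F₂) ∪ (F₁∩F₂)⟩, where ⟨S⟩ denotes the upward closure (the filter generated by S). Then F_m and G_m are filters with F_m ⊆ G_m, the pair (F_m,G_m) is a lower bound of (F₁,G₁) and (F₂,G₂) in the dominance order (mvt(F_m,G_m) ≼ mvt(Fᵢ,Gᵢ) for i = 1,2), and it is a greatest lower bound: for all filters F′ ⊆ G′ with mvt(F′,G′) ≼ mvt(Fᵢ,Gᵢ) for i = 1,2, also mvt(F′,G′) ≼ mvt(F_m,G_m). In other words, mvt(F_m,G_m) is the meet of mvt(F₁,G₁) and mvt(F₂,G₂) in the lattice of matching value terms. -/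
open Finset

/-- The upward closure ⟨S⟩ of a subset S of a finite lattice (the filter generated
by S, when S is nonempty). -/
noncomputable def upClosure {L : Type*} [Lattice L] [Fintype L] (S : Finset L) : Finset L :=
  open scoped Classical in Finset.univ.filter (fun x => ∃ s ∈ S, s ≤ x)

lemma mem_upClosure {L : Type*} [Lattice L] [Fintype L] {S : Finset L} {x : L} :
    x ∈ upClosure S ↔ ∃ s ∈ S, s ≤ x := by
  classical simp [upClosure]

/-- Sufficiency: containments imply dominance. -/
lemma mvtLe_of_subsets {L : Type*} [DecidableEq L] {F G F' G' : Finset L}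
    (hFne : F.Nonempty) (hFG : F ⊆ G) (hF'G' : F' ⊆ G')
    (hFF' : F ⊆ F') (hdiff : G' \ F' ⊆ G \ F) :
    MvtLe F G F' G' := by
  intro w hw
  have ha : 0 < ∑ c ∈ F, w c := Finset.sum_pos (fun c _ => hw c) hFne
  have haa' : ∑ c ∈ F, w c ≤ ∑ c ∈ F', w c :=
    Finset.sum_le_sum_of_subset_of_nonneg hFF' (fun c _ _ => (hw c).le)
  have hbb' : ∑ c ∈ G' \ F', w c ≤ ∑ c ∈ G \ F, w c :=
    Finset.sum_le_sum_of_subset_of_nonneg hdiff (fun c _ _ => (hw c).le)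
  have hb : 0 ≤ ∑ c ∈ G \ F, w c := Finset.sum_nonneg fun c _ => (hw c).le
  have hb' : 0 ≤ ∑ c ∈ G' \ F', w c := Finset.sum_nonneg fun c _ => (hw c).le
  rw [← Finset.sum_sdiff hFG, ← Finset.sum_sdiff hF'G']
  rw [div_le_div_iff₀ (by linarith) (by linarith)]
  nlinarith [mul_le_mul haa' hbb' hb' (by linarith : (0:ℝ) ≤ ∑ c ∈ F', w c)]

lemma sum_ite_of_notMem' {L : Type*} [DecidableEq L] {S : Finset L} {c : L}
    (hc : c ∉ S) (v : ℝ) : ∑ x ∈ S, (if x = c then v else 1) = S.card := by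
  rw [Finset.sum_congr rfl (fun x hx => if_neg (by rintro rfl; exact hc hx))]
  simp

/-- Necessity, part 1: dominance implies F' ⊆ F₁. -/
lemma subset_of_mvtLe {L : Type*} [Lattice L] [Fintype L] [DecidableEq L]
    {F' G' F₁ G₁ : Finset L}
    (hF'G' : F' ⊆ G') (h₁ : F₁ ⊂ G₁)
    (hle : MvtLe F' G' F₁ G₁) : F' ⊆ F₁ := by
  intro c hc
  by_contra hcF₁
  set n : ℝ := (Fintype.card L : ℝ) with hn
  have hn1 : (1:ℝ) ≤ n := by
    have : 0 < Fintype.card L := Fintype.card_pos_iff.mpr ⟨c⟩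
    rw [hn]; exact_mod_cast this
  set w : L → ℝ := fun x => if x = c then n^2 else 1 with hw
  have hwpos : ∀ x : L, 0 < w x := by
    intro x; simp only [hw]; split
    · positivity
    · norm_num
  have key := hle w hwpos
  have hF'big : n^2 ≤ ∑ x ∈ F', w x := by
    have := Finset.single_le_sum (f := w) (fun x _ => (hwpos x).le) hc
    simpa [hw] using this
  have hG'split : ∑ x ∈ G', w x = (∑ x ∈ G' \ F', w x) + ∑ x ∈ F', w x :=
    (Finset.sum_sdiff hF'G').symm
  have hdiff_small : ∑ x ∈ G' \ F', w x ≤ n := by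
    have hcn : c ∉ G' \ F' := fun h => (Finset.mem_sdiff.mp h).2 hc
    rw [show w = fun x => if x = c then n^2 else 1 from hw, sum_ite_of_notMem' hcn]
    have : (G' \ F').card ≤ Fintype.card L := by
      simpa using Finset.card_le_univ (G' \ F')
    rw [hn]; exact_mod_cast this
  have hF₁small : ∑ x ∈ F₁, w x ≤ n - 1 := by
    rw [show w = fun x => if x = c then n^2 else 1 from hw, sum_ite_of_notMem' hcF₁]
    have h1 : F₁.card < G₁.card := Finset.card_lt_card h₁
    have h2 : G₁.card ≤ Fintype.card L := by simpa using Finset.card_le_univ G₁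
    have h3 : F₁.card + 1 ≤ Fintype.card L := by omega
    have h4 : ((F₁.card : ℝ) + 1) ≤ n := by rw [hn]; exact_mod_cast h3
    linarith
  have hF₁nn : 0 ≤ ∑ x ∈ F₁, w x := Finset.sum_nonneg fun x _ => (hwpos x).le
  have hG₁big : (∑ x ∈ F₁, w x) + 1 ≤ ∑ x ∈ G₁, w x := by
    obtain ⟨d, hd⟩ := Finset.exists_of_ssubset h₁
    have hdmem : d ∈ G₁ \ F₁ := Finset.mem_sdiff.mpr ⟨hd.1, hd.2⟩
    have h1 : (1:ℝ) ≤ w d := by simp only [hw]; split <;> nlinarith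
    have h2 : w d ≤ ∑ x ∈ G₁ \ F₁, w x :=
      Finset.single_le_sum (fun x _ => (hwpos x).le) hdmem
    have h3 : ∑ x ∈ G₁, w x = (∑ x ∈ G₁ \ F₁, w x) + ∑ x ∈ F₁, w x :=
      (Finset.sum_sdiff h₁.subset).symm
    linarith
  have hG'diff_nn : 0 ≤ ∑ x ∈ G' \ F', w x := Finset.sum_nonneg fun x _ => (hwpos x).le
  have hF'nn : (0:ℝ) ≤ ∑ x ∈ F', w x := by nlinarith
  have hG'pos : 0 < ∑ x ∈ G', w x := by nlinarith
  have hG₁pos : 0 < ∑ x ∈ G₁, w x := by linarith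
  rw [div_le_div_iff₀ hG'pos hG₁pos] at key
  have fact1 : (∑ x ∈ F', w x) * ((∑ x ∈ F₁, w x) + 1) ≤ (∑ x ∈ F', w x) * (∑ x ∈ G₁, w x) :=
    mul_le_mul_of_nonneg_left hG₁big hF'nn
  have fact2 : (∑ x ∈ F₁, w x) * (∑ x ∈ G', w x) ≤ (∑ x ∈ F₁, w x) * ((∑ x ∈ F', w x) + n) :=
    mul_le_mul_of_nonneg_left (by linarith) hF₁nn
  have fact3 : (∑ x ∈ F₁, w x) * n ≤ (n - 1) * n :=
    mul_le_mul_of_nonneg_right hF₁small (by linarith)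
  nlinarith [fact1, fact2, fact3, key, hF'big, hn1]

/-- Necessity, part 2: dominance implies G₁ \ F₁ ⊆ G'. -/
lemma sdiff_subset_of_mvtLe {L : Type*} [Lattice L] [Fintype L] [DecidableEq L]
    {F' G' F₁ G₁ : Finset L} (hF' : IsFilter F') (hF₁ : IsFilter F₁)
    (hF'G' : F' ⊆ G') (h₁ : F₁ ⊂ G₁)
    (hle : MvtLe F' G' F₁ G₁) : G₁ \ F₁ ⊆ G' := by
  intro d hd
  rw [Finset.mem_sdiff] at hd
  by_contra hdG'
  set n : ℝ := (Fintype.card L : ℝ) with hn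
  have hn1 : (1:ℝ) ≤ n := by
    have : 0 < Fintype.card L := Fintype.card_pos_iff.mpr ⟨d⟩
    rw [hn]; exact_mod_cast this
  set w : L → ℝ := fun x => if x = d then n^2 else 1 with hw
  have hwpos : ∀ x : L, 0 < w x := by
    intro x; simp only [hw]; split
    · positivity
    · norm_num
  have key := hle w hwpos
  have cardle : ∀ S : Finset L, (S.card : ℝ) ≤ n := by
    intro S
    have : S.card ≤ Fintype.card L := by simpa using Finset.card_le_univ S
    rw [hn]; exact_mod_cast this
  have hdF' : d ∉ F' := fun h => hdG' (hF'G' h)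
  have hF'eq : ∑ x ∈ F', w x = F'.card := by
    rw [show w = fun x => if x = d then n^2 else 1 from hw, sum_ite_of_notMem' hdF']
  have hG'eq : ∑ x ∈ G', w x = G'.card := by
    rw [show w = fun x => if x = d then n^2 else 1 from hw, sum_ite_of_notMem' hdG']
  have hF₁eq : ∑ x ∈ F₁, w x = F₁.card := by
    rw [show w = fun x => if x = d then n^2 else 1 from hw, sum_ite_of_notMem' hd.2]
  have hF'ge1 : (1:ℝ) ≤ F'.card := by
    have := Finset.card_pos.mpr hF'.1; exact_mod_cast this
  have hG'ge1 : (1:ℝ) ≤ G'.card := by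
    have := Finset.card_pos.mpr ⟨_, hF'G' hF'.1.choose_spec⟩; exact_mod_cast this
  have hF₁ge1 : (1:ℝ) ≤ F₁.card := by
    have := Finset.card_pos.mpr hF₁.1; exact_mod_cast this
  have hG₁big : (∑ x ∈ F₁, w x) + n^2 ≤ ∑ x ∈ G₁, w x := by
    have hdmem : d ∈ G₁ \ F₁ := Finset.mem_sdiff.mpr hd
    have h1 : w d = n^2 := by simp [hw]
    have h2 : w d ≤ ∑ x ∈ G₁ \ F₁, w x :=
      Finset.single_le_sum (fun x _ => (hwpos x).le) hdmem
    have h3 : ∑ x ∈ G₁, w x = (∑ x ∈ G₁ \ F₁, w x) + ∑ x ∈ F₁, w x :=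
      (Finset.sum_sdiff h₁.subset).symm
    linarith
  have hG'pos : 0 < ∑ x ∈ G', w x := by rw [hG'eq]; linarith
  have hG₁pos : 0 < ∑ x ∈ G₁, w x := by rw [hF₁eq] at hG₁big; nlinarith
  rw [div_le_div_iff₀ hG'pos hG₁pos] at key
  rw [hF'eq, hG'eq, hF₁eq] at key
  have c1 : (F₁.card : ℝ) * (G'.card : ℝ) ≤ n * n :=
    mul_le_mul (cardle F₁) (cardle G') (by linarith) (by linarith)
  have c2 : ((F₁.card : ℝ) + n^2) ≤ (F'.card : ℝ) * (∑ x ∈ G₁, w x) := by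
    rw [hF₁eq] at hG₁big
    nlinarith [mul_le_mul_of_nonneg_right hF'ge1 hG₁pos.le]
  nlinarith

lemma top_mem_of_isFilter {L : Type*} [Lattice L] [OrderTop L] {F : Finset L}
    (hF : IsFilter F) : (⊤ : L) ∈ F := by
  obtain ⟨c, hc⟩ := hF.1
  exact hF.2 c hc ⊤ le_top

/-- with F_m = F₁∩F₂ and G_m = ⟨(G₁∖F₁) ∪ (G₂∖F₂) ∪ (F₁∩F₂)⟩, the pair
(F_m,G_m) consists of filters with F_m ⊆ G_m and mvt(F_m,G_m) is the meet of
mvt(F₁,G₁) and mvt(F₂,G₂) in the dominance order. -/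
theorem stmt9 {L : Type*} [Lattice L] [Fintype L] [DecidableEq L] [OrderTop L]
    (F₁ G₁ F₂ G₂ : Finset L)
    (hF₁ : IsFilter F₁) (hG₁ : IsFilter G₁) (hF₂ : IsFilter F₂) (hG₂ : IsFilter G₂)
    (h₁ : F₁ ⊂ G₁) (h₂ : F₂ ⊂ G₂) :
    IsFilter (F₁ ∩ F₂) ∧
    IsFilter (upClosure ((G₁ \ F₁) ∪ (G₂ \ F₂) ∪ (F₁ ∩ F₂))) ∧
    F₁ ∩ F₂ ⊆ upClosure ((G₁ \ F₁) ∪ (G₂ \ F₂) ∪ (F₁ ∩ F₂)) ∧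
    MvtLe (F₁ ∩ F₂) (upClosure ((G₁ \ F₁) ∪ (G₂ \ F₂) ∪ (F₁ ∩ F₂))) F₁ G₁ ∧
    MvtLe (F₁ ∩ F₂) (upClosure ((G₁ \ F₁) ∪ (G₂ \ F₂) ∪ (F₁ ∩ F₂))) F₂ G₂ ∧
    (∀ F' G' : Finset L, IsFilter F' → IsFilter G' → F' ⊆ G' →
      MvtLe F' G' F₁ G₁ → MvtLe F' G' F₂ G₂ →
      MvtLe F' G' (F₁ ∩ F₂) (upClosure ((G₁ \ F₁) ∪ (G₂ \ F₂) ∪ (F₁ ∩ F₂)))) := by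
  set Fm : Finset L := F₁ ∩ F₂ with hFm
  set S : Finset L := (G₁ \ F₁) ∪ (G₂ \ F₂) ∪ (F₁ ∩ F₂) with hS
  set Gm : Finset L := upClosure S with hGm
  -- F_m is a filter
  have hFmFilter : IsFilter Fm := by
    constructor
    · exact ⟨⊤, Finset.mem_inter.mpr ⟨top_mem_of_isFilter hF₁, top_mem_of_isFilter hF₂⟩⟩
    · intro c hc c' hcc'
      rw [Finset.mem_inter] at hc ⊢
      exact ⟨hF₁.2 c hc.1 c' hcc', hF₂.2 c hc.2 c' hcc'⟩
  -- F_m ⊆ G_m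
  have hFmGm : Fm ⊆ Gm := by
    intro c hc
    exact mem_upClosure.mpr ⟨c, Finset.mem_union_right _ hc, le_rfl⟩
  -- G_m is a filter
  have hGmFilter : IsFilter Gm := by
    constructor
    · exact hFmFilter.1.mono hFmGm
    · intro c hc c' hcc'
      obtain ⟨s, hs, hsc⟩ := mem_upClosure.mp hc
      exact mem_upClosure.mpr ⟨s, hs, hsc.trans hcc'⟩
  -- lower bound against (F₁, G₁)
  have hdiff₁ : G₁ \ F₁ ⊆ Gm \ Fm := by
    intro x hx
    rw [Finset.mem_sdiff] at hx ⊢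
    refine ⟨mem_upClosure.mpr ⟨x, Finset.mem_union_left _ (Finset.mem_union_left _
      (Finset.mem_sdiff.mpr hx)), le_rfl⟩, ?_⟩
    intro hxFm
    exact hx.2 (Finset.mem_inter.mp hxFm).1
  have hdiff₂ : G₂ \ F₂ ⊆ Gm \ Fm := by
    intro x hx
    rw [Finset.mem_sdiff] at hx ⊢
    refine ⟨mem_upClosure.mpr ⟨x, Finset.mem_union_left _ (Finset.mem_union_right _
      (Finset.mem_sdiff.mpr hx)), le_rfl⟩, ?_⟩
    intro hxFm
    exact hx.2 (Finset.mem_inter.mp hxFm).2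
  have hlb₁ : MvtLe Fm Gm F₁ G₁ :=
    mvtLe_of_subsets hFmFilter.1 hFmGm h₁.subset Finset.inter_subset_left hdiff₁
  have hlb₂ : MvtLe Fm Gm F₂ G₂ :=
    mvtLe_of_subsets hFmFilter.1 hFmGm h₂.subset Finset.inter_subset_right hdiff₂
  refine ⟨hFmFilter, hGmFilter, hFmGm, hlb₁, hlb₂, ?_⟩
  -- greatest lower bound
  intro F' G' hF' hG' hF'G' hle₁ hle₂
  have hsub₁ : F' ⊆ F₁ := subset_of_mvtLe hF'G' h₁ hle₁
  have hsub₂ : F' ⊆ F₂ := subset_of_mvtLe hF'G' h₂ hle₂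
  have hd₁ : G₁ \ F₁ ⊆ G' := sdiff_subset_of_mvtLe hF' hF₁ hF'G' h₁ hle₁
  have hd₂ : G₂ \ F₂ ⊆ G' := sdiff_subset_of_mvtLe hF' hF₂ hF'G' h₂ hle₂
  have hF'Fm : F' ⊆ Fm := fun c hc => Finset.mem_inter.mpr ⟨hsub₁ hc, hsub₂ hc⟩
  apply mvtLe_of_subsets hF'.1 hF'G' hFmGm hF'Fm
  intro x hx
  rw [Finset.mem_sdiff] at hx
  obtain ⟨s, hs, hsx⟩ := mem_upClosure.mp hx.1
  have hxG' : x ∈ G' := by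
    rcases Finset.mem_union.mp hs with hs' | hs'
    · rcases Finset.mem_union.mp hs' with h | h
      · exact hG'.2 s (hd₁ h) x hsx
      · exact hG'.2 s (hd₂ h) x hsx
    · exact absurd (hFmFilter.2 s hs' x hsx) hx.2
  rw [Finset.mem_sdiff]
  exact ⟨hxG', fun hxF' => hx.2 (hF'Fm hxF')⟩
end

section
/- Let L be a finite lattice and let r be an admissible relation on pairs (F,G) of nonempty subsets of L, i.e. r satisfies: (1) r(F,G) holds whenever G ⊆ F; (2) if r(F,G) holds and C ∉ F then r(F, G∖{C}) holds; (3) if r(F,G) holds then r(F∪{C}, G∪{C}) holds for every C ∈ L. Then the set of matching value terms R = { mvt(F,G) : r(F,G) } is upward closed in the dominance order: if r(F₁,G₁) holds with F₁ ⊆ G₁, F₁ nonempty, and F₂ ⊆ G₂ are nonempty subsets with either F₂ = G₂, or F₁ ⊆ F₂ and G₂∖F₂ ⊆ G₁ (the condition characterizing mvt(F₁,G₁) ≼ mvt(F₂,G₂)), then r(F₂,G₂) holds. Hence R is a filter in the lattice of matching value terms. -/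
/-!
Inserting the elements of `F₂` into both sides of `(F₁, G₁)` gives `(F₂, F₂ ∪ G₁)`, since
`F₁ ⊆ F₂`; as `G₂ \ F₂ ⊆ G₁`, the second component contains `G₂`, and the surplus
`(F₂ ∪ G₁) \ G₂` is disjoint from `F₂ ⊆ G₂`, so it can be erased one element at a time.
-/

open Finset

section AdmissibleRelation

variable {α : Type*} [DecidableEq α] {r : Finset α → Finset α → Prop}

theorem rel_union_union_of_forall_insert
    (hins : ∀ (F G : Finset α) (C : α), r F G → r (insert C F) (insert C G))
    (S : Finset α) {F G : Finset α} (h : r F G) : r (S ∪ F) (S ∪ G) := by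
  induction S using Finset.induction_on with
  | empty => simpa
  | insert C S _ ih => simpa only [insert_union] using hins _ _ C ih

theorem rel_sdiff_of_forall_erase
    (herase : ∀ (F G : Finset α) (C : α), r F G → C ∉ F → r F (G.erase C))
    {F G T : Finset α} (hT : Disjoint T F) (h : r F G) : r F (G \ T) := by
  induction T using Finset.induction_on with
  | empty => simpa
  | insert C T _ ih =>
    rw [disjoint_insert_left] at hT
    rw [sdiff_insert]
    exact herase _ _ C (ih hT.2) hT.1

theorem rel_of_subset_of_forall_erase
    (herase : ∀ (F G : Finset α) (C : α), r F G → C ∉ F → r F (G.erase C))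
    {F G G' : Finset α} (hFG' : F ⊆ G') (hG' : G' ⊆ G) (h : r F G) : r F G' := by
  have hdisj : Disjoint (G \ G') F :=
    disjoint_left.mpr fun _ hx hxF => (mem_sdiff.mp hx).2 (hFG' hxF)
  simpa only [Finset.sdiff_sdiff_eq_self hG'] using rel_sdiff_of_forall_erase herase hdisj h

end AdmissibleRelation

theorem stmt11_general {L : Type*} [DecidableEq L]
    (r : Finset L → Finset L → Prop)
    (hadm1 : ∀ F G : Finset L, G ⊆ F → r F G)
    (hadm2 : ∀ (F G : Finset L) (C : L), r F G → C ∉ F → r F (G.erase C))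
    (hadm3 : ∀ (F G : Finset L) (C : L), r F G → r (insert C F) (insert C G))
    (F₁ G₁ F₂ G₂ : Finset L)
    (h₂ : F₂ ⊆ G₂)
    (hr : r F₁ G₁)
    (hdom : F₂ = G₂ ∨ (F₁ ⊆ F₂ ∧ G₂ \ F₂ ⊆ G₁)) :
    r F₂ G₂ := by
  rcases hdom with rfl | ⟨hF, hG⟩
  · exact hadm1 _ _ subset_rfl
  · have hunion : r F₂ (F₂ ∪ G₁) := by
      simpa only [union_eq_left.mpr hF] using rel_union_union_of_forall_insert hadm3 F₂ hr
    exact rel_of_subset_of_forall_erase hadm2 h₂ (sdiff_le_iff.mp hG) hunion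

/-- if r is an admissible relation on pairs of nonempty subsets of a
finite lattice L, then the set of matching value terms { mvt(F,G) : r(F,G) } is
upward closed in the dominance order: if r(F₁,G₁) holds with F₁ ⊆ G₁, F₁ nonempty,
and F₂ ⊆ G₂ are nonempty with either F₂ = G₂ or (F₁ ⊆ F₂ and G₂∖F₂ ⊆ G₁)
(the condition characterizing mvt(F₁,G₁) ≼ mvt(F₂,G₂)), then r(F₂,G₂) holds. -/
theorem stmt11 {L : Type*} [Lattice L] [Fintype L] [DecidableEq L]
    (r : Finset L → Finset L → Prop)
    (hadm1 : ∀ F G : Finset L, G ⊆ F → r F G)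
    (hadm2 : ∀ (F G : Finset L) (C : L), r F G → C ∉ F → r F (G.erase C))
    (hadm3 : ∀ (F G : Finset L) (C : L), r F G → r (insert C F) (insert C G))
    (F₁ G₁ F₂ G₂ : Finset L)
    (hne₁ : F₁.Nonempty) (hne₂ : F₂.Nonempty)
    (h₁ : F₁ ⊆ G₁) (h₂ : F₂ ⊆ G₂)
    (hr : r F₁ G₁)
    (hdom : F₂ = G₂ ∨ (F₁ ⊆ F₂ ∧ G₂ \ F₂ ⊆ G₁)) :
    r F₂ G₂ :=
  stmt11_general r hadm1 hadm2 hadm3 F₁ G₁ F₂ G₂ h₂ hr hdom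
end

section
/- Let n ≥ 1 and let P be a finite family of formal strict inequalities, each given by a pair (U,V) of multisets over {1,…,n} with multiplicity functions m_U, m_V : {1,…,n} → ℕ. Then P is realisable (i.e. there exists v : {1,…,n} → ℝ with v(i) > 0 for all i such that Σ_{i=1}^{n} m_U(i)·v(i) < Σ_{i=1}^{n} m_V(i)·v(i) holds for every (U,V) ∈ P) if and only if there is no positive integer combination of inequalities in P that results in an inequality A < B with B ⊆ A as multisets; that is, if and only if there is no family of nonnegative integer coefficients (c_{(U,V)})_{(U,V)∈P}, not all zero, such that Σ_{(U,V)∈P} c_{(U,V)}·m_V(i) ≤ Σ_{(U,V)∈P} c_{(U,V)}·m_U(i) holds for every i ∈ {1,…,n}. -/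
/-!
Adding the positivity constraints `xᵢ > 0` as extra rows `eᵢ`, realisability becomes the
solvability of a homogeneous system of strict inequalities `aⱼ · x > 0` with integer rows, and a
combination of the kind forbidden in the statement becomes a nontrivial ℕ-combination of these rows
that vanishes. By Gordan's alternative exactly one of the two happens. Proving it by Fourier–Motzkin
elimination of the last variable keeps all multipliers natural numbers, so the certificate obtained
is integral.
-/

open Finset

section LinearAlgebra

variable {R : Type*} [CommRing R]

lemma sum_mul_sum_eq_sum_nsmul_apply {ι σ : Type*} [Fintype ι] [Fintype σ] (a : ι → σ → ℤ)
    (c : ι → ℕ) (v : σ → R) :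
    ∑ j, (c j : R) * ∑ i, (a j i : R) * v i = ∑ i, ((∑ j, c j • a j) i : R) * v i := by
  simp only [Finset.sum_apply, Pi.smul_apply]
  simp only [nsmul_eq_mul, Int.cast_sum, Int.cast_mul, Int.cast_natCast, mul_sum, sum_mul,
    mul_assoc]
  rw [sum_comm]

lemma sum_mul_snoc {n : ℕ} (b : Fin (n + 1) → ℤ) (v : Fin n → R) (t : R) :
    ∑ i, (b i : R) * (Fin.snoc v t : Fin (n + 1) → R) i =
      ∑ i, (Fin.init b i : R) * v i + b (Fin.last n) * t := by
  simp [Fin.sum_univ_castSucc, Fin.init]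

lemma sum_mul_init_add_smul {n : ℕ} (x y : ℤ) (b c : Fin (n + 1) → ℤ) (v : Fin n → R) :
    ∑ i, (Fin.init (x • b + y • c) i : R) * v i =
      x * ∑ i, (Fin.init b i : R) * v i + y * ∑ i, (Fin.init c i : R) * v i := by
  simp [Fin.init, add_mul, sum_add_distrib, mul_sum, mul_assoc]

end LinearAlgebra

section Elimination

variable {ι : Type*} [DecidableEq ι] {n : ℕ} (a : ι → Fin (n + 1) → ℤ)

abbrev EliminationIndex :=
  {j // 0 < a j (Fin.last n)} × {j // a j (Fin.last n) < 0} ⊕ {j // a j (Fin.last n) = 0}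

def eliminationWeight : EliminationIndex a → ι → ℕ
  | .inl (p, q) => Pi.single p.1 (a q.1 (Fin.last n)).natAbs +
      Pi.single q.1 (a p.1 (Fin.last n)).natAbs
  | .inr z => Pi.single z.1 1

lemma eliminationWeight_ne_zero (k : EliminationIndex a) : eliminationWeight a k ≠ 0 := by
  rcases k with ⟨p, q⟩ | z
  · exact Function.ne_iff.mpr ⟨p.1, by simp [eliminationWeight, q.2.ne]⟩
  · exact Function.ne_iff.mpr ⟨z.1, by simp [eliminationWeight]⟩

variable [Fintype ι]

def eliminationRow (k : EliminationIndex a) : Fin (n + 1) → ℤ :=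
  ∑ j, eliminationWeight a k j • a j

lemma eliminationRow_inl (p : {j // 0 < a j (Fin.last n)}) (q : {j // a j (Fin.last n) < 0}) :
    eliminationRow a (.inl (p, q)) =
      (-a q.1 (Fin.last n)) • a p.1 + a p.1 (Fin.last n) • a q.1 := by
  simp only [eliminationRow, eliminationWeight, Pi.add_apply, add_smul, sum_add_distrib,
    Pi.single_apply, ite_smul, zero_smul, sum_ite_eq', mem_univ, if_true]
  rw [← natCast_zsmul, ← natCast_zsmul, Int.ofNat_natAbs_of_nonpos q.2.le,
    Int.natAbs_of_nonneg p.2.le]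

lemma eliminationRow_inr (z : {j // a j (Fin.last n) = 0}) :
    eliminationRow a (.inr z) = a z.1 := by
  simp [eliminationRow, eliminationWeight, Pi.single_apply, ite_smul]

lemma eliminationRow_last (k : EliminationIndex a) : eliminationRow a k (Fin.last n) = 0 := by
  rcases k with ⟨p, q⟩ | z
  · rw [eliminationRow_inl]
    simp only [Pi.add_apply, Pi.smul_apply, smul_eq_mul]
    ring
  · simpa [eliminationRow_inr] using z.2

variable {K : Type*} [Field K] [LinearOrder K] [IsStrictOrderedRing K]

lemma exists_forall_sum_mul_snoc_pos (v : Fin n → K)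
    (hv : ∀ k, 0 < ∑ i, (Fin.init (eliminationRow a k) i : K) * v i) :
    ∃ t, ∀ j, 0 < ∑ i, (a j i : K) * (Fin.snoc v t : Fin (n + 1) → K) i := by
  set S : ι → K := fun j => ∑ i, (Fin.init (a j) i : K) * v i
  set α : ι → K := fun j => a j (Fin.last n)
  have hpq (p : {j // 0 < a j (Fin.last n)}) (q : {j // a j (Fin.last n) < 0}) :
      0 < -α q * S p + α p * S q := by
    have := hv (.inl (p, q))
    rwa [eliminationRow_inl, sum_mul_init_add_smul, Int.cast_neg] at this
  have hz (z : {j // a j (Fin.last n) = 0}) : 0 < S z := by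
    simpa [eliminationRow_inr] using hv (.inr z)
  have hα_pos (p : {j // 0 < a j (Fin.last n)}) : 0 < α p := Int.cast_pos.mpr p.2
  have hα_neg (q : {j // a j (Fin.last n) < 0}) : α q < 0 := Int.cast_lt_zero.mpr q.2
  obtain ⟨t, hlt, hgt⟩ :=
    (univ.image fun p : {j // 0 < a j (Fin.last n)} => -S p / α p).exists_between'
      (univ.image fun q : {j // a j (Fin.last n) < 0} => S q / -α q) (by
        simp only [mem_image, mem_univ, true_and, forall_exists_index, forall_apply_eq_imp_iff]
        intro p q
        rw [div_lt_div_iff₀ (hα_pos p) (neg_pos.mpr (hα_neg q))]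
        linarith [hpq p q])
  simp only [mem_image, mem_univ, true_and, forall_exists_index, forall_apply_eq_imp_iff] at hlt hgt
  refine ⟨t, fun j => ?_⟩
  rw [sum_mul_snoc]
  rcases lt_trichotomy 0 (a j (Fin.last n)) with hj | hj | hj
  · have := (div_lt_iff₀ (hα_pos ⟨j, hj⟩)).mp (hlt ⟨j, hj⟩)
    simp only [α] at this
    linarith
  · simpa [← hj] using hz ⟨j, hj.symm⟩
  · have := (lt_div_iff₀ (neg_pos.mpr (hα_neg ⟨j, hj⟩))).mp (hgt ⟨j, hj⟩)
    simp only [α] at this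
    linarith

end Elimination

section Gordan

variable {K : Type*} [Field K] [LinearOrder K] [IsStrictOrderedRing K]

lemma not_exists_nat_combination_eq_zero {ι σ : Type*} [Fintype ι] [Fintype σ]
    {a : ι → σ → ℤ} {v : σ → K} (hv : ∀ j, 0 < ∑ i, (a j i : K) * v i) :
    ¬ ∃ c : ι → ℕ, c ≠ 0 ∧ ∑ j, c j • a j = 0 := by
  rintro ⟨c, hc0, hc⟩
  obtain ⟨j₀, hj₀⟩ := Function.ne_iff.mp hc0
  have hpos : 0 < ∑ j, (c j : K) * ∑ i, (a j i : K) * v i :=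
    sum_pos' (fun j _ => mul_nonneg (Nat.cast_nonneg _) (hv j).le)
      ⟨j₀, mem_univ _, mul_pos (by simpa [Nat.pos_iff_ne_zero] using hj₀) (hv j₀)⟩
  rw [sum_mul_sum_eq_sum_nsmul_apply, hc] at hpos
  simp at hpos

lemma exists_nat_combination_eq_zero_of_weights {ι κ σ : Type*} [Fintype ι] [Fintype κ]
    (a : ι → σ → ℤ) (w : κ → ι → ℕ) (hw : ∀ k, w k ≠ 0)
    (h : ∃ c : κ → ℕ, c ≠ 0 ∧ ∑ k, c k • ∑ j, w k j • a j = 0) :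
    ∃ c : ι → ℕ, c ≠ 0 ∧ ∑ j, c j • a j = 0 := by
  obtain ⟨c, hc0, hc⟩ := h
  refine ⟨∑ k, c k • w k, ?_, ?_⟩
  · obtain ⟨k, hk⟩ := Function.ne_iff.mp hc0
    simp only [ne_eq, sum_eq_zero_iff, mem_univ, true_implies, smul_eq_zero, not_forall, not_or]
    exact ⟨k, hk, hw k⟩
  · rw [← hc]
    simp only [Finset.sum_apply, Pi.smul_apply, smul_eq_mul, sum_smul, mul_smul, smul_sum]
    exact sum_comm

lemma exists_nat_combination_eq_zero_of_init {κ : Type*} [Fintype κ] {n : ℕ}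
    (b : κ → Fin (n + 1) → ℤ) (hb : ∀ k, b k (Fin.last n) = 0)
    (h : ∃ c : κ → ℕ, c ≠ 0 ∧ ∑ k, c k • Fin.init (b k) = 0) :
    ∃ c : κ → ℕ, c ≠ 0 ∧ ∑ k, c k • b k = 0 := by
  obtain ⟨c, hc0, hc⟩ := h
  refine ⟨c, hc0, funext fun i => ?_⟩
  induction i using Fin.lastCases with
  | last => simp [Finset.sum_apply, hb]
  | cast i => simpa [Finset.sum_apply, Fin.init] using congrFun hc i

theorem exists_forall_sum_mul_pos_of_not_exists {n : ℕ} {ι : Type*} [Fintype ι]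
    (a : ι → Fin n → ℤ) (h : ¬ ∃ c : ι → ℕ, c ≠ 0 ∧ ∑ j, c j • a j = 0) :
    ∃ v : Fin n → K, ∀ j, 0 < ∑ i, (a j i : K) * v i := by
  classical
  induction n generalizing ι with
  | zero =>
    have : IsEmpty ι := ⟨fun j => h ⟨Pi.single j 1, by simp, Subsingleton.elim _ _⟩⟩
    exact ⟨0, isEmptyElim⟩
  | succ n ih =>
    obtain ⟨v, hv⟩ := ih (fun k => Fin.init (eliminationRow a k)) fun hc =>
      h <| exists_nat_combination_eq_zero_of_weights a _ (eliminationWeight_ne_zero a) <|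
        exists_nat_combination_eq_zero_of_init _ (eliminationRow_last a) hc
    obtain ⟨t, ht⟩ := exists_forall_sum_mul_snoc_pos a v hv
    exact ⟨Fin.snoc v t, ht⟩

theorem gordan_alternative {n : ℕ} {ι : Type*} [Fintype ι] (a : ι → Fin n → ℤ) :
    (∃ v : Fin n → K, ∀ j, 0 < ∑ i, (a j i : K) * v i) ↔
      ¬ ∃ c : ι → ℕ, c ≠ 0 ∧ ∑ j, c j • a j = 0 :=
  ⟨fun ⟨_, hv⟩ => not_exists_nat_combination_eq_zero hv, exists_forall_sum_mul_pos_of_not_exists a⟩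

end Gordan

section Realisability

variable {ι σ : Type*} [Fintype σ] [DecidableEq σ]

def realisabilityRows (U V : ι → σ → ℕ) : ι ⊕ σ → σ → ℤ :=
  Sum.elim (fun j i => V j i - U j i) fun k => Pi.single k 1

lemma exists_pos_forall_sum_lt_iff {K : Type*} [Field K] [LinearOrder K] [IsStrictOrderedRing K]
    (U V : ι → σ → ℕ) :
    (∃ v : σ → K, (∀ i, 0 < v i) ∧ ∀ j, ∑ i, (U j i : K) * v i < ∑ i, (V j i : K) * v i) ↔
      ∃ v : σ → K, ∀ r, 0 < ∑ i, (realisabilityRows U V r i : K) * v i := by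
  simp [realisabilityRows, Sum.forall, sub_mul, sum_sub_distrib, Pi.single_apply, and_comm]

lemma sum_nsmul_realisabilityRows_apply [Fintype ι] (U V : ι → σ → ℕ) (c : ι ⊕ σ → ℕ) (i : σ) :
    (∑ r, c r • realisabilityRows U V r) i =
      ∑ j, (c (.inl j) * V j i : ℕ) - ∑ j, (c (.inl j) * U j i : ℕ) + c (.inr i) := by
  simp [realisabilityRows, Finset.sum_apply, Pi.single_apply, mul_sub, sum_sub_distrib]

lemma exists_nat_combination_le_iff [Fintype ι] (U V : ι → σ → ℕ) :
    (∃ c : ι → ℕ, (∃ j, c j ≠ 0) ∧ ∀ i, ∑ j, c j * V j i ≤ ∑ j, c j * U j i) ↔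
      ∃ c : ι ⊕ σ → ℕ, c ≠ 0 ∧ ∑ r, c r • realisabilityRows U V r = 0 := by
  constructor
  · rintro ⟨c, ⟨j, hj⟩, hle⟩
    refine ⟨Sum.elim c fun i => ∑ j, c j * U j i - ∑ j, c j * V j i,
      Function.ne_iff.mpr ⟨.inl j, hj⟩, funext fun i => ?_⟩
    rw [sum_nsmul_realisabilityRows_apply, Pi.zero_apply]
    push_cast [Sum.elim_inl, Sum.elim_inr, Nat.cast_sub (hle i)]
    ring
  · rintro ⟨c, hc0, hc⟩
    have hcoord (i : σ) := congrFun hc i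
    simp only [sum_nsmul_realisabilityRows_apply, Pi.zero_apply] at hcoord
    refine ⟨c ∘ Sum.inl, ?_, fun i => by have := hcoord i; simp only [Function.comp_apply]; omega⟩
    by_contra! hinl
    refine hc0 (funext fun r => ?_)
    rcases r with j | i
    · exact hinl j
    · have := hcoord i
      simp only [Function.comp_apply] at hinl
      simpa [hinl] using this

end Realisability

theorem stmt13_general (n : ℕ) {ι : Type*} [Fintype ι]
    (U V : ι → Fin n → ℕ) :
    (∃ v : Fin n → ℝ, (∀ i, 0 < v i) ∧
        ∀ j : ι, ∑ i, (U j i : ℝ) * v i < ∑ i, (V j i : ℝ) * v i) ↔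
    ¬ ∃ c : ι → ℕ, (∃ j, c j ≠ 0) ∧
        ∀ i : Fin n, ∑ j, c j * V j i ≤ ∑ j, c j * U j i := by
  rw [exists_pos_forall_sum_lt_iff, exists_nat_combination_le_iff]
  exact gordan_alternative _

/-- Theorem thm-realisable: a finite family of formal strict
inequalities Σᵢ m_U(i)·xᵢ < Σᵢ m_V(i)·xᵢ over variables x₁,…,xₙ (indexed by a
finite type ι, with multiplicity functions U j, V j : Fin n → ℕ) is realisable by
a strictly positive real substitution iff no positive integer combination of the
inequalities results in A < B with B ⊆ A as multisets. -/
theorem stmt13 (n : ℕ) (hn : 1 ≤ n) {ι : Type*} [Fintype ι]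
    (U V : ι → Fin n → ℕ) :
    (∃ v : Fin n → ℝ, (∀ i, 0 < v i) ∧
        ∀ j : ι, ∑ i, (U j i : ℝ) * v i < ∑ i, (V j i : ℝ) * v i) ↔
    ¬ ∃ c : ι → ℕ, (∃ j, c j ≠ 0) ∧
        ∀ i : Fin n, ∑ j, c j * V j i ≤ ∑ j, c j * U j i :=
  stmt13_general n U V
end

section
/- Let L be a finite lattice, let E ⊆ L × L be a set of directed edges containing all pairs (u,v) with u ≤ v, and let d : L × L → ℝ be a degree function with 0 < d(u,v) ≤ 1 for every (u,v) ∈ E and d(u,v) = 1 for every pair with u ≤ v. For a nonempty subset O ⊆ L, let Ô(v) be the supremum of the lengths of all directed paths from an element of O to v (and 0 if no such path exists), where a path is a finite sequence v₁, v₂, …, vₙ with all consecutive pairs (vᵢ,vᵢ₊₁) ∈ E and its length is the product Π d(vᵢ,vᵢ₊₁) of the degrees of its edges. Then the extension Ô of O is a fuzzy filter in L: for every t ∈ [0,1] the level set {s ∈ L : Ô(s) ≥ t} is either empty or a filter of L; equivalently, Ô is monotone, i.e. s ≤ s′ implies Ô(s) ≤ Ô(s′). -/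
/-- A filter of a lattice, as a set: a nonempty, upward-closed subset. -/
def IsSetFilter {L : Type*} [Lattice L] (F : Set L) : Prop :=
  F.Nonempty ∧ ∀ c ∈ F, ∀ c', c ≤ c' → c' ∈ F

/-- The extension Ô of a set O of properties in a directed weighted graph (E, d)
on L: Ô(v) is the supremum of the lengths of all directed paths from an element of
O to v (and 0 if there is no such path), where the length of a path is the product
of the degrees of its edges. -/
noncomputable def pathExt {L : Type*} (E : Set (L × L)) (d : L → L → ℝ)
    (O : Set L) (v : L) : ℝ :=
  sSup ({0} ∪ { x : ℝ | ∃ l : List L, l ≠ [] ∧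
    l.Chain' (fun a b => (a, b) ∈ E) ∧
    (∃ s ∈ O, l.head? = some s) ∧ l.getLast? = some v ∧
    x = ((l.zip l.tail).map fun p => d p.1 p.2).prod })

/-!
Appending to a path ending at `u` an edge `(u, v)` with `u ≤ v`, of degree `1`, gives a path of
the same length ending at `v`; so the set of path lengths at `v` only grows with `v`. Degrees in
`(0, 1]` bound every length by `1`, so the suprema are taken over bounded sets and `Ô` is
monotone, whence its level sets are upward closed. They are nonempty for `t ≤ 1`, since the
one-vertex path at an element of `O` has length `1`.
-/

namespace List

variable {α : Type*}

theorem zip_tail_concat (y : α) :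
    ∀ (l : List α) (hl : l ≠ []),
      (l ++ [y]).zip (l ++ [y]).tail = l.zip l.tail ++ [(l.getLast hl, y)]
  | [a], _ => rfl
  | a :: b :: l, _ => by
    have ih := zip_tail_concat y (b :: l) (cons_ne_nil b l)
    simp only [cons_append, zip_cons_cons, tail_cons] at ih ⊢
    rw [ih, getLast_cons_cons]

theorem rel_of_mem_zip_tail {R : α → α → Prop} :
    ∀ {l : List α}, l.IsChain R → ∀ p ∈ l.zip l.tail, R p.1 p.2
  | [], _, p, hp | [_], _, p, hp => by simp at hp
  | a :: b :: l, h, p, hp => by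
    rw [isChain_cons_cons] at h
    simp only [tail_cons, zip_cons_cons, mem_cons] at hp
    rcases hp with rfl | hp
    · exact h.1
    · exact rel_of_mem_zip_tail h.2 p hp

end List

section PathExt

variable {L : Type*} {E : Set (L × L)} {d : L → L → ℝ} {O : Set L}

def pathLengths (E : Set (L × L)) (d : L → L → ℝ) (O : Set L) (v : L) : Set ℝ :=
  { x : ℝ | ∃ l : List L, l ≠ [] ∧
    l.IsChain (fun a b => (a, b) ∈ E) ∧
    (∃ s ∈ O, l.head? = some s) ∧ l.getLast? = some v ∧
    x = ((l.zip l.tail).map fun p => d p.1 p.2).prod }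

theorem pathExt_eq_sSup (v : L) : pathExt E d O v = sSup ({0} ∪ pathLengths E d O v) := rfl

theorem one_mem_upperBounds_pathLengths (hd : ∀ p ∈ E, 0 ≤ d p.1 p.2 ∧ d p.1 p.2 ≤ 1) (v : L) :
    1 ∈ upperBounds (pathLengths E d O v) := by
  rintro _ ⟨l, -, hchain, -, -, rfl⟩
  have hdeg : ∀ p ∈ l.zip l.tail, 0 ≤ d p.1 p.2 ∧ d p.1 p.2 ≤ 1 :=
    fun p hp => hd p (List.rel_of_mem_zip_tail hchain p hp)
  simpa using List.prod_map_le_prod_map₀ _ (fun _ => 1) (fun p hp => (hdeg p hp).1)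
    (fun p hp => (hdeg p hp).2)

theorem bddAbove_pathExt_set (hd : ∀ p ∈ E, 0 ≤ d p.1 p.2 ∧ d p.1 p.2 ≤ 1) (v : L) :
    BddAbove ({0} ∪ pathLengths E d O v) :=
  bddAbove_singleton.union ⟨1, one_mem_upperBounds_pathLengths hd v⟩

theorem one_mem_pathLengths {s : L} (hs : s ∈ O) : 1 ∈ pathLengths E d O s :=
  ⟨[s], List.cons_ne_nil s [], List.isChain_singleton s, ⟨s, hs, rfl⟩, rfl, rfl⟩

theorem mul_mem_pathLengths {u v : L} {x : ℝ} (hx : x ∈ pathLengths E d O u) (huv : (u, v) ∈ E) :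
    x * d u v ∈ pathLengths E d O v := by
  obtain ⟨l, hl, hchain, ⟨s, hs, hhead⟩, hlast, rfl⟩ := hx
  obtain rfl : l.getLast hl = u := by simpa [List.getLast?_eq_some_getLast hl] using hlast
  refine ⟨l ++ [v], List.concat_ne_nil v l, ?_, ⟨s, hs, ?_⟩, by simp, ?_⟩
  · refine hchain.append (List.isChain_singleton v) fun a ha b hb => ?_
    simp_all [List.getLast?_eq_some_getLast hl]
  · rwa [List.head?_append_of_ne_nil _ hl]
  · simp [List.zip_tail_concat v l hl]

theorem one_le_pathExt (hd : ∀ p ∈ E, 0 ≤ d p.1 p.2 ∧ d p.1 p.2 ≤ 1) {s : L} (hs : s ∈ O) :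
    1 ≤ pathExt E d O s :=
  pathExt_eq_sSup s ▸ le_csSup (bddAbove_pathExt_set hd s) (Or.inr (one_mem_pathLengths hs))

variable [Preorder L]

theorem pathLengths_mono (hE : ∀ u v : L, u ≤ v → (u, v) ∈ E)
    (hd1 : ∀ u v : L, u ≤ v → d u v = 1) : Monotone (pathLengths E d O) := fun u v huv x hx => by
  simpa [hd1 u v huv] using mul_mem_pathLengths hx (hE u v huv)

theorem pathExt_mono (hE : ∀ u v : L, u ≤ v → (u, v) ∈ E)
    (hd : ∀ p ∈ E, 0 ≤ d p.1 p.2 ∧ d p.1 p.2 ≤ 1) (hd1 : ∀ u v : L, u ≤ v → d u v = 1) :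
    Monotone (pathExt E d O) := fun u v huv => by
  rw [pathExt_eq_sSup, pathExt_eq_sSup]
  exact csSup_le_csSup (bddAbove_pathExt_set hd v) ⟨0, Or.inl rfl⟩
    (Set.union_subset_union_right _ (pathLengths_mono hE hd1 huv))

end PathExt

theorem isSetFilter_setOf_le_of_monotone {L : Type*} [Lattice L] {β : Type*} [Preorder β] {f : L → β}
    (hf : Monotone f) {t : β} {a : L} (ha : t ≤ f a) : IsSetFilter {s | t ≤ f s} :=
  ⟨⟨a, ha⟩, fun _ hc _ hcc' => hc.trans (hf hcc')⟩

theorem stmt16_general {L : Type*} [Lattice L]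
    (E : Set (L × L)) (d : L → L → ℝ)
    (hE : ∀ u v : L, u ≤ v → (u, v) ∈ E)
    (hd : ∀ p ∈ E, 0 < d p.1 p.2 ∧ d p.1 p.2 ≤ 1)
    (hd1 : ∀ u v : L, u ≤ v → d u v = 1)
    (O : Set L) (hO : O.Nonempty) :
    (∀ t : ℝ, 0 ≤ t → t ≤ 1 →
      {s : L | t ≤ pathExt E d O s} = ∅ ∨ IsSetFilter {s : L | t ≤ pathExt E d O s}) ∧
    (∀ s s' : L, s ≤ s' → pathExt E d O s ≤ pathExt E d O s') := by
  have hd' : ∀ p ∈ E, 0 ≤ d p.1 p.2 ∧ d p.1 p.2 ≤ 1 := fun p hp => ⟨(hd p hp).1.le, (hd p hp).2⟩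
  have hmono : Monotone (pathExt E d O) := pathExt_mono hE hd' hd1
  obtain ⟨s, hs⟩ := hO
  exact ⟨fun t _ ht => Or.inr (isSetFilter_setOf_le_of_monotone hmono
    (ht.trans (one_le_pathExt hd' hs))), fun _ _ h => hmono h⟩

/-- if E ⊆ L×L contains all pairs (u,v) with u ≤ v and d assigns to
every edge a degree in (0,1], equal to 1 on pairs with u ≤ v, then for every
nonempty O ⊆ L the extension Ô of O is a fuzzy filter in L: every level set
{s : Ô(s) ≥ t} with t ∈ [0,1] is empty or a filter; equivalently Ô is monotone. -/
theorem stmt16 {L : Type*} [Lattice L] [Fintype L]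
    (E : Set (L × L)) (d : L → L → ℝ)
    (hE : ∀ u v : L, u ≤ v → (u, v) ∈ E)
    (hd : ∀ p ∈ E, 0 < d p.1 p.2 ∧ d p.1 p.2 ≤ 1)
    (hd1 : ∀ u v : L, u ≤ v → d u v = 1)
    (O : Set L) (hO : O.Nonempty) :
    (∀ t : ℝ, 0 ≤ t → t ≤ 1 →
      {s : L | t ≤ pathExt E d O s} = ∅ ∨ IsSetFilter {s : L | t ≤ pathExt E d O s}) ∧
    (∀ s s' : L, s ≤ s' → pathExt E d O s ≤ pathExt E d O s') :=
  stmt16_general E d hE hd hd1 O hO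
end

section
/- Let 2 ≤ k and k+2 ≤ ℓ be integers and let w₁, …, w_ℓ be positive real numbers such that w_k ≤ w_i for all 1 ≤ i ≤ k and w_{k+1} ≤ w_j for all k+1 ≤ j ≤ ℓ. Then (w₁ + ⋯ + w_{k-1} + w_{k+2} + ⋯ + w_ℓ)·(w₁ + ⋯ + w_ℓ) > (w₁ + ⋯ + w_{k-1} + w_{k+1} + ⋯ + w_ℓ)·(w₁ + ⋯ + w_k). (This is the inequality underlying the paper's counterexample showing that, in the lattice with top element x₁, n−1 pairwise incomparable elements x₂,…,xₙ and bottom element y, no weight assignment totally preserves an arbitrary plausible human-defined matching function: the strict reverse inequality required by total preservation can never hold.) -/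
open Finset

/-!
Write `A = w₁ + ⋯ + w_k`, `B = w_{k+1} + ⋯ + w_ℓ`, `a = w_k`, `b = w_{k+1}`. The minimality
assumptions give `A ≥ k a ≥ 2a` and `B ≥ (ℓ - k) b ≥ 2b`, so the difference of the two sides,
`(A - a) B - b A + B (B - b)`, is at least `b (A - 2a) + B (B - b) > 0`.
-/

theorem Finset.sum_Icc_add_sum_Icc_add_one {M : Type*} [AddCommMonoid M] (f : ℕ → M)
    {m n p : ℕ} (hmn : m ≤ n + 1) (hnp : n ≤ p) :
    ∑ i ∈ Icc m n, f i + ∑ i ∈ Icc (n + 1) p, f i = ∑ i ∈ Icc m p, f i := by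
  simp only [← Ico_add_one_right_eq_Icc]
  exact sum_Ico_consecutive f hmn (Nat.succ_le_succ hnp)

theorem Finset.two_mul_le_sum_of_forall_le {ι R : Type*} [Semiring R] [PartialOrder R]
    [IsOrderedRing R] {s : Finset ι} {f : ι → R} {i : ι}
    (hs : 2 ≤ #s) (hi₀ : 0 ≤ f i) (hi : ∀ j ∈ s, f i ≤ f j) :
    2 * f i ≤ ∑ j ∈ s, f j :=
  calc 2 * f i ≤ #s * f i := by gcongr; simpa using Nat.mono_cast (α := R) hs
    _ = #s • f i := (nsmul_eq_mul _ _).symm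
    _ ≤ ∑ j ∈ s, f j := card_nsmul_le_sum s f (f i) hi

theorem mul_sub_sub_lt_mul_sub {R : Type*} [CommRing R] [LinearOrder R] [IsStrictOrderedRing R]
    {A B a b : R} (ha : 0 ≤ a) (hb : 0 < b)
    (hA : 2 * a ≤ A) (hB : 2 * b ≤ B) :
    (A + B - a) * A < (A + B - (a + b)) * (A + B) := by
  nlinarith [mul_nonneg hb.le (by linarith : 0 ≤ A - 2 * a),
    mul_nonneg (by linarith : 0 ≤ B - 2 * b) (by linarith : 0 ≤ A - a),
    mul_pos (by linarith : 0 < B) (by linarith : 0 < B - b)]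

/-- for positive reals w₁,…,w_ℓ with 2 ≤ k, k+2 ≤ ℓ, w_k minimal among
w₁,…,w_k and w_{k+1} minimal among w_{k+1},…,w_ℓ, we have
(w₁+⋯+w_{k-1}+w_{k+2}+⋯+w_ℓ)·(w₁+⋯+w_ℓ) > (w₁+⋯+w_{k-1}+w_{k+1}+⋯+w_ℓ)·(w₁+⋯+w_k). -/
theorem stmt17 (k ℓ : ℕ) (hk : 2 ≤ k) (hℓ : k + 2 ≤ ℓ) (w : ℕ → ℝ)
    (hpos : ∀ i ∈ Finset.Icc 1 ℓ, 0 < w i)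
    (hmink : ∀ i ∈ Finset.Icc 1 k, w k ≤ w i)
    (hminl : ∀ j ∈ Finset.Icc (k + 1) ℓ, w (k + 1) ≤ w j) :
    (∑ i ∈ Finset.Icc 1 ℓ \ {k, k + 1}, w i) * (∑ i ∈ Finset.Icc 1 ℓ, w i) >
    (∑ i ∈ Finset.Icc 1 ℓ \ {k}, w i) * (∑ i ∈ Finset.Icc 1 k, w i) := by
  have hk_mem : k ∈ Icc 1 ℓ := mem_Icc.2 ⟨by omega, by omega⟩
  have hk1_mem : k + 1 ∈ Icc 1 ℓ := mem_Icc.2 ⟨by omega, by omega⟩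
  have hsplit := sum_Icc_add_sum_Icc_add_one w (m := 1) (n := k) (p := ℓ) (by omega) (by omega)
  have hpair : ({k, k + 1} : Finset ℕ) ⊆ Icc 1 ℓ :=
    insert_subset hk_mem (singleton_subset_iff.2 hk1_mem)
  rw [sum_sdiff_eq_sub hpair, sum_pair (by omega), sum_sdiff_eq_sub (singleton_subset_iff.2 hk_mem),
    sum_singleton, ← hsplit]
  refine mul_sub_sub_lt_mul_sub (hpos k hk_mem).le (hpos (k + 1) hk1_mem) ?_ ?_
  · exact two_mul_le_sum_of_forall_le (by rw [Nat.card_Icc]; omega) (hpos k hk_mem).le hmink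
  · exact two_mul_le_sum_of_forall_le (by rw [Nat.card_Icc]; omega) (hpos (k + 1) hk1_mem).le hminl
end
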